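/- Let G be a d-regular finite simple undirected graph on n vertices (d ≥ 1), let S and S′ be two sets of vertices with |S| = |S′| and a(S) = a(S′), and let η and η′ solve the McAvoy–Allen system for S and S′ respectively. Then Σ_{u,v ∈ V} |N(u) ∩ N(v)| · η(u,v) = Σ_{u,v ∈ V} |N(u) ∩ N(v)| · η′(u,v); in particular, the constant c(G,S) depends on the configuration S only through its size and its number of active edges. -/

import Mathlib

open Finset

variable {V : Type*}

/-- Number of active edges: edges with exactly one endpoint in `S`. -/
def activeCount [Fintype V] [DecidableEq V] (G : SimpleGraph V) [DecidableRel G.Adj]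
    (S : Finset V) : ℕ :=
  (G.edgeFinset.filter (fun e =>
    Sym2.lift ⟨fun u v => xor (decide (u ∈ S)) (decide (v ∈ S)),
      fun u v => Bool.xor_comm _ _⟩ e = true)).card

/-- `η` solves the McAvoy–Allen system for `S` on a `d`-regular graph `G`. -/
def MASolves [Fintype V] [DecidableEq V] (G : SimpleGraph V) [DecidableRel G.Adj]
    (d : ℕ) (S : Finset V) (η : V → V → ℝ) : Prop :=
  (∀ u, η u u = 0) ∧
  ∀ u v, u ≠ v →
    η u v = ((Fintype.card V : ℝ) / 2) *
        |(if u ∈ S then (1 : ℝ) else 0) - (if v ∈ S then (1 : ℝ) else 0)|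
      + (1 / (2 * (d : ℝ))) *
        ((∑ w ∈ G.neighborFinset u, η w v) + (∑ w ∈ G.neighborFinset v, η u w))

/-!
Write the system as `η = b + (A η + η A) / (2d)` off the diagonal, with source
`b u v = n/2 · |x_S u - x_S v|` and `A` the adjacency matrix. Summing over all pairs, regularity
turns the averaging terms back into `Σ η`, so only the failure of the system on the diagonal
survives: the sum `E` of `η` over adjacent pairs is `d · Σ b = d n |S| (n - |S|)`. Summing over
adjacent pairs instead, the averaging terms count two-step walks and give
`Σ |N(u) ∩ N(v)| η(u,v) / d`, whence this sum is
`d (E - Σ_{u ∼ v} b) = d n (d |S| (n - |S|) - a(S))`.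
-/

namespace SimpleGraph

variable {M : Type*} [Fintype V] [AddCommMonoid M] (G : SimpleGraph V) [DecidableRel G.Adj]

theorem sum_sum_neighborFinset_comm (f : V → V → M) :
    ∑ u, ∑ v ∈ G.neighborFinset u, f u v = ∑ v, ∑ u ∈ G.neighborFinset v, f u v :=
  Finset.sum_comm' fun u v => by simp [G.adj_comm]

variable {G} in
theorem IsRegularOfDegree.sum_sum_neighborFinset {d : ℕ} (hreg : G.IsRegularOfDegree d)
    (f : V → M) : ∑ u, ∑ v ∈ G.neighborFinset u, f v = d • ∑ v, f v := by
  rw [sum_sum_neighborFinset_comm, smul_sum]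
  refine sum_congr rfl fun v _ => ?_
  rw [sum_const, card_neighborFinset_eq_degree, hreg v]

theorem sum_neighborFinset_sum_neighborFinset [DecidableEq V] (u : V) (f : V → M) :
    ∑ v ∈ G.neighborFinset u, ∑ w ∈ G.neighborFinset v, f w
      = ∑ w, #(G.neighborFinset u ∩ G.neighborFinset w) • f w := by
  rw [Finset.sum_comm' (t' := univ) (s' := fun w => G.neighborFinset u ∩ G.neighborFinset w)
    fun v w => by simp [G.adj_comm]]
  simp only [sum_const]

theorem sum_sum_neighborFinset_eq_sum_dart (f : V → V → M) :
    ∑ u, ∑ v ∈ G.neighborFinset u, f u v = ∑ d : G.Dart, f d.fst d.snd := by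
  rw [← sum_finset_product' (univ.filter fun p : V × V => G.Adj p.1 p.2) _ _ (by simp)]
  exact sum_bij' (fun p hp => ⟨p, (mem_filter.1 hp).2⟩) (fun d _ => d.toProd)
    (by simp) (by simp) (by simp) (by simp) (by simp)

theorem sum_dart_edge [DecidableEq V] (f : Sym2 V → M) :
    ∑ d : G.Dart, f d.edge = 2 • ∑ e ∈ G.edgeFinset, f e := by
  rw [← sum_fiberwise_of_maps_to (g := Dart.edge) (t := G.edgeFinset) (by simp), smul_sum]
  refine sum_congr rfl fun e he => ?_
  rw [sum_congr rfl fun d hd => by rw [(mem_filter.1 hd).2], sum_const,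
    G.dart_edge_fiber_card e (mem_edgeFinset.1 he)]

end SimpleGraph

def SolvesPairRecurrence [Fintype V] (G : SimpleGraph V) [DecidableRel G.Adj] (d : ℕ)
    (b η : V → V → ℝ) : Prop :=
  (∀ u, η u u = 0) ∧
  ∀ u v, u ≠ v →
    η u v = b u v + (1 / (2 * (d : ℝ))) *
      ((∑ w ∈ G.neighborFinset u, η w v) + (∑ w ∈ G.neighborFinset v, η u w))

namespace SolvesPairRecurrence

variable [Fintype V] {G : SimpleGraph V} [DecidableRel G.Adj] {d : ℕ} {b η : V → V → ℝ}

theorem sum_sum_neighborFinset (hreg : G.IsRegularOfDegree d) (hd : d ≠ 0)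
    (hb : ∀ u, b u u = 0) (hη : SolvesPairRecurrence G d b η) :
    ∑ u, ∑ v ∈ G.neighborFinset u, η u v = d * ∑ u, ∑ v, b u v := by
  classical
  set c : ℝ := 1 / (2 * d)
  -- The recurrence fails on the diagonal exactly by the neighbour sums `r u`.
  set r : V → ℝ := fun u => ∑ w ∈ G.neighborFinset u, η w u + ∑ w ∈ G.neighborFinset u, η u w
  have hdiag : ∀ u v, η u v + (if u = v then c * r u else 0)
      = b u v + c * (∑ w ∈ G.neighborFinset u, η w v + ∑ w ∈ G.neighborFinset v, η u w) := by
    intro u v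
    obtain rfl | huv := eq_or_ne u v
    · simp [hη.1, hb, r]
    · rw [hη.2 u v huv, if_neg huv, add_zero]
  have hsum := sum_congr rfl fun u (_ : u ∈ univ) =>
    sum_congr rfl fun v (_ : v ∈ univ) => hdiag u v
  have hleft : ∑ u, ∑ v, ∑ w ∈ G.neighborFinset u, η w v = d * ∑ u, ∑ v, η u v := by
    rw [sum_comm]
    simp only [hreg.sum_sum_neighborFinset, nsmul_eq_mul, ← mul_sum]
    rw [sum_comm]
  have hright : ∑ u, ∑ v, ∑ w ∈ G.neighborFinset v, η u w = d * ∑ u, ∑ v, η u v := by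
    simp only [hreg.sum_sum_neighborFinset, nsmul_eq_mul, ← mul_sum]
  have hr : ∑ u, r u = 2 * ∑ u, ∑ v ∈ G.neighborFinset u, η u v := by
    simp only [r, sum_add_distrib]
    rw [G.sum_sum_neighborFinset_comm (fun w u => η u w)]
    ring
  simp only [sum_add_distrib, ← mul_sum, sum_ite_eq, mem_univ, if_true, hleft, hright, hr] at hsum
  have hc : c * (2 * d) = 1 := by
    have hd' : (d : ℝ) ≠ 0 := by exact_mod_cast hd
    simp only [c]
    field_simp
  linear_combination (d : ℝ) * hsum
    - (∑ u, ∑ v ∈ G.neighborFinset u, η u v - d * ∑ u, ∑ v, η u v) * hc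

theorem sum_sum_card_inter_mul [DecidableEq V] (hd : d ≠ 0) (hη : SolvesPairRecurrence G d b η) :
    ∑ u, ∑ v, (#(G.neighborFinset u ∩ G.neighborFinset v) : ℝ) * η u v
      = d * (∑ u, ∑ v ∈ G.neighborFinset u, η u v - ∑ u, ∑ v ∈ G.neighborFinset u, b u v) := by
  have hadj := sum_congr rfl fun u (_ : u ∈ univ) => sum_congr rfl fun v hv =>
    hη.2 u v (G.ne_of_adj ((G.mem_neighborFinset u v).1 hv))
  have hleft : ∑ u, ∑ v ∈ G.neighborFinset u, ∑ w ∈ G.neighborFinset u, η w v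
      = ∑ u, ∑ v, (#(G.neighborFinset u ∩ G.neighborFinset v) : ℝ) * η u v := by
    rw [sum_congr rfl fun u _ => sum_comm,
      G.sum_sum_neighborFinset_comm fun u w => ∑ v ∈ G.neighborFinset u, η w v]
    simp only [G.sum_neighborFinset_sum_neighborFinset, nsmul_eq_mul]
  have hright : ∑ u, ∑ v ∈ G.neighborFinset u, ∑ w ∈ G.neighborFinset v, η u w
      = ∑ u, ∑ v, (#(G.neighborFinset u ∩ G.neighborFinset v) : ℝ) * η u v := by
    simp only [G.sum_neighborFinset_sum_neighborFinset, nsmul_eq_mul]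
  simp only [sum_add_distrib, ← mul_sum, hleft, hright] at hadj
  have hc : 1 / (2 * d) * (2 * d : ℝ) = 1 := by
    have hd' : (d : ℝ) ≠ 0 := by exact_mod_cast hd
    field_simp
  linear_combination -(d : ℝ) * hadj
    - (∑ u, ∑ v, (#(G.neighborFinset u ∩ G.neighborFinset v) : ℝ) * η u v) * hc

end SolvesPairRecurrence

section Indicator

variable [Fintype V] [DecidableEq V]

theorem sum_sum_abs_indicator_sub (S : Finset V) :
    ∑ u, ∑ v, |(if u ∈ S then (1 : ℝ) else 0) - (if v ∈ S then (1 : ℝ) else 0)|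
      = 2 * #S * #Sᶜ := by
  have hsplit : ∀ u v : V,
      |(if u ∈ S then (1 : ℝ) else 0) - (if v ∈ S then (1 : ℝ) else 0)|
        = (if u ∈ S then 1 else 0) * (if v ∈ Sᶜ then 1 else 0)
          + (if v ∈ S then 1 else 0) * (if u ∈ Sᶜ then 1 else 0) := by
    intro u v
    by_cases hu : u ∈ S <;> by_cases hv : v ∈ S <;> simp [hu, hv]
  simp only [hsplit, sum_add_distrib, ← mul_sum, ← sum_mul, sum_boole, filter_mem_eq_inter,
    univ_inter]
  ring

theorem sum_sum_neighborFinset_abs_indicator_sub (G : SimpleGraph V) [DecidableRel G.Adj]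
    (S : Finset V) :
    ∑ u, ∑ v ∈ G.neighborFinset u,
        |(if u ∈ S then (1 : ℝ) else 0) - (if v ∈ S then (1 : ℝ) else 0)|
      = 2 * activeCount G S := by
  set active : Sym2 V → Bool := Sym2.lift ⟨fun u v => xor (decide (u ∈ S)) (decide (v ∈ S)),
    fun u v => Bool.xor_comm _ _⟩
  have habs : ∀ u v : V,
      |(if u ∈ S then (1 : ℝ) else 0) - (if v ∈ S then (1 : ℝ) else 0)|
        = if active s(u, v) = true then 1 else 0 := by
    intro u v
    by_cases hu : u ∈ S <;> by_cases hv : v ∈ S <;> simp [active, hu, hv]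
  simp only [habs]
  rw [G.sum_sum_neighborFinset_eq_sum_dart]
  refine (G.sum_dart_edge fun e => if active e = true then (1 : ℝ) else 0).trans ?_
  rw [sum_boole, nsmul_eq_mul]
  rfl

end Indicator

theorem MASolves.sum_sum_card_inter_mul [Fintype V] [DecidableEq V] {G : SimpleGraph V}
    [DecidableRel G.Adj] {d : ℕ} (hd : d ≠ 0) (hreg : G.IsRegularOfDegree d) {S : Finset V}
    {η : V → V → ℝ} (hη : MASolves G d S η) :
    ∑ u, ∑ v, (#(G.neighborFinset u ∩ G.neighborFinset v) : ℝ) * η u v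
      = d * Fintype.card V * (d * #S * #Sᶜ - activeCount G S) := by
  have hrec : SolvesPairRecurrence G d (fun u v => (Fintype.card V : ℝ) / 2 *
      |(if u ∈ S then (1 : ℝ) else 0) - (if v ∈ S then (1 : ℝ) else 0)|) η := hη
  rw [hrec.sum_sum_card_inter_mul hd, hrec.sum_sum_neighborFinset hreg hd (by simp)]
  simp only [← mul_sum, sum_sum_abs_indicator_sub, sum_sum_neighborFinset_abs_indicator_sub]
  ring

theorem constant_depends_only_on_size_and_active [Fintype V] [DecidableEq V]
    (G : SimpleGraph V) [DecidableRel G.Adj]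
    (d : ℕ) (hd : 1 ≤ d) (hreg : G.IsRegularOfDegree d)
    (S S' : Finset V) (hcard : S.card = S'.card)
    (hactive : activeCount G S = activeCount G S')
    (η η' : V → V → ℝ) (hη : MASolves G d S η) (hη' : MASolves G d S' η') :
    ∑ u : V, ∑ v : V, ((G.neighborFinset u ∩ G.neighborFinset v).card : ℝ) * η u v
    = ∑ u : V, ∑ v : V, ((G.neighborFinset u ∩ G.neighborFinset v).card : ℝ) * η' u v := by
  have hd0 : d ≠ 0 := Nat.one_le_iff_ne_zero.mp hd
  rw [hη.sum_sum_card_inter_mul hd0 hreg, hη'.sum_sum_card_inter_mul hd0 hreg, card_compl,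
    card_compl, hcard, hactive]
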